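/- Let ℓ ≥ 1, m = 2ℓ, and let A be a complex skew-symmetric m×m matrix with det(A^{(2k)}) ≠ 0 for k = 1, …, ℓ. Let J be the m×m block diagonal skew-symmetric matrix whose ℓ diagonal 2×2 blocks are [[0,-1],[1,0]]. Then there exists a complex m×m matrix B, lower block triangular with respect to the partition of indices into consecutive pairs, whose k-th diagonal 2×2 block equals r·I₂ for some nonzero complex number r (depending on k), such that A = B · J · Bᵀ. Moreover B is unique up to multiplication on the right by a block diagonal matrix whose 2×2 diagonal blocks are ±I₂: if B and B' are two such matrices with A = B·J·Bᵀ = B'·J·B'ᵀ, then B' = B · D where D is block diagonal with each 2×2 diagonal block equal to I₂ or -I₂. -/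
import Mathlib


open Matrix

/-- The `2ℓ × 2ℓ` block diagonal skew-symmetric matrix whose `ℓ` diagonal `2 × 2`
blocks are `[[0, -1], [1, 0]]`. -/
def skewJC (ℓ : ℕ) : Matrix (Fin (2 * ℓ)) (Fin (2 * ℓ)) ℂ :=
  Matrix.of fun i j =>
    if (i : ℕ) / 2 = (j : ℕ) / 2 then
      if (i : ℕ) % 2 = 0 ∧ (j : ℕ) % 2 = 1 then -1
      else if (i : ℕ) % 2 = 1 ∧ (j : ℕ) % 2 = 0 then 1
      else 0
    else 0

/-- `B` is a complex skew-symmetric Cholesky factor of `A`: it is lower block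
triangular w.r.t. consecutive pairs of indices, its `k`-th diagonal `2 × 2` block is
`r • I₂` for some nonzero `r ∈ ℂ`, and `A = B * J * Bᵀ`. -/
def IsSkewCholFactor (ℓ : ℕ) (A B : Matrix (Fin (2 * ℓ)) (Fin (2 * ℓ)) ℂ) : Prop :=
  (∀ i j : Fin (2 * ℓ), (i : ℕ) / 2 < (j : ℕ) / 2 → B i j = 0) ∧
  (∀ k : ℕ, ∀ hk : k < ℓ, ∃ r : ℂ, r ≠ 0 ∧
    B ⟨2 * k, by omega⟩ ⟨2 * k, by omega⟩ = r ∧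
    B ⟨2 * k, by omega⟩ ⟨2 * k + 1, by omega⟩ = 0 ∧
    B ⟨2 * k + 1, by omega⟩ ⟨2 * k, by omega⟩ = 0 ∧
    B ⟨2 * k + 1, by omega⟩ ⟨2 * k + 1, by omega⟩ = r) ∧
  A = B * skewJC ℓ * Bᵀ

noncomputable section
namespace SC

def j0 : Matrix (Fin 2) (Fin 2) ℂ :=
  Matrix.of fun i j =>
    if (i : ℕ) = 0 ∧ (j : ℕ) = 1 then -1
    else if (i : ℕ) = 1 ∧ (j : ℕ) = 0 then 1 else 0

lemma j0t : j0ᵀ = -j0 := by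
  ext i j
  fin_cases i <;> fin_cases j <;> simp [j0]

lemma j0_mul_j0 : j0 * j0 = -1 := by
  ext i j
  fin_cases i <;> fin_cases j <;>
    simp [j0, Matrix.mul_apply, Fin.sum_univ_two, Matrix.one_apply]

lemma j0t_mul_j0 : j0ᵀ * j0 = 1 := by
  rw [j0t, Matrix.neg_mul, j0_mul_j0, neg_neg]

lemma j0_mul_j0t : j0 * j0ᵀ = 1 := by
  rw [j0t, Matrix.mul_neg, j0_mul_j0, neg_neg]

lemma j0_det : j0.det = 1 := by
  rw [Matrix.det_fin_two]
  simp [j0]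

def eN (n : ℕ) : Fin 2 ⊕ Fin (2 * n) ≃ Fin (2 * (n + 1)) :=
  finSumFinEquiv.trans (finCongr (by ring))

lemma eN_inl (n : ℕ) (a : Fin 2) : ((eN n) (Sum.inl a) : ℕ) = a := by
  simp [eN]

lemma eN_inr (n : ℕ) (b : Fin (2 * n)) : ((eN n) (Sum.inr b) : ℕ) = 2 + b := by
  simp [eN]; omega

lemma eN_symm {n : ℕ} (i : Fin (2 * (n + 1))) :
    (eN n).symm i = if h : (i : ℕ) < 2 then Sum.inl ⟨i, h⟩
      else Sum.inr ⟨(i : ℕ) - 2, by omega⟩ := by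
  rw [Equiv.symm_apply_eq]
  split_ifs with h
  · exact Fin.ext (by simp [eN_inl])
  · refine Fin.ext ?_
    rw [eN_inr]
    simp only [Fin.val_mk]
    omega

lemma skewJC_succ (n : ℕ) :
    skewJC (n + 1) = reindex (eN n) (eN n) (fromBlocks j0 0 0 (skewJC n)) := by
  ext i j
  rw [reindex_apply, submatrix_apply, eN_symm, eN_symm]
  split_ifs with h1 h2 h2
  · simp only [fromBlocks_apply₁₁, skewJC, j0, of_apply]
    split_ifs <;> first | rfl | omega
  · simp only [fromBlocks_apply₁₂, Matrix.zero_apply, skewJC, of_apply]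
    rw [if_neg (by omega)]
  · simp only [fromBlocks_apply₂₁, Matrix.zero_apply, skewJC, of_apply]
    rw [if_neg (by omega)]
  · simp only [fromBlocks_apply₂₂, skewJC, of_apply]
    split_ifs <;> first | rfl | omega

lemma reindex_mul {m n : Type*} [Fintype m] [Fintype n] [DecidableEq m] [DecidableEq n]
    (e : m ≃ n) (M N : Matrix m m ℂ) :
    reindex e e M * reindex e e N = reindex e e (M * N) := by
  simp [reindex_apply, Matrix.submatrix_mul_equiv]

-- entry lemmas for reindexed block matrices
variable {n : ℕ}

lemma rb_apply_11 (M : Matrix (Fin 2 ⊕ Fin (2 * n)) (Fin 2 ⊕ Fin (2 * n)) ℂ)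
    (i j : Fin (2 * (n + 1))) (x y : Fin 2) (hx : (i : ℕ) = x) (hy : (j : ℕ) = y) :
    reindex (eN n) (eN n) M i j = M (Sum.inl x) (Sum.inl y) := by
  rw [reindex_apply, submatrix_apply]
  congr 1
  · rw [Equiv.symm_apply_eq]; exact Fin.ext (by rw [eN_inl]; omega)
  · rw [Equiv.symm_apply_eq]; exact Fin.ext (by rw [eN_inl]; omega)

lemma rb_apply_12 (M : Matrix (Fin 2 ⊕ Fin (2 * n)) (Fin 2 ⊕ Fin (2 * n)) ℂ)
    (i j : Fin (2 * (n + 1))) (x : Fin 2) (y : Fin (2 * n))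
    (hx : (i : ℕ) = x) (hy : (j : ℕ) = 2 + y) :
    reindex (eN n) (eN n) M i j = M (Sum.inl x) (Sum.inr y) := by
  rw [reindex_apply, submatrix_apply]
  congr 1
  · rw [Equiv.symm_apply_eq]; exact Fin.ext (by rw [eN_inl]; omega)
  · rw [Equiv.symm_apply_eq]; exact Fin.ext (by rw [eN_inr]; omega)

lemma rb_apply_21 (M : Matrix (Fin 2 ⊕ Fin (2 * n)) (Fin 2 ⊕ Fin (2 * n)) ℂ)
    (i j : Fin (2 * (n + 1))) (x : Fin (2 * n)) (y : Fin 2)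
    (hx : (i : ℕ) = 2 + x) (hy : (j : ℕ) = y) :
    reindex (eN n) (eN n) M i j = M (Sum.inr x) (Sum.inl y) := by
  rw [reindex_apply, submatrix_apply]
  congr 1
  · rw [Equiv.symm_apply_eq]; exact Fin.ext (by rw [eN_inr]; omega)
  · rw [Equiv.symm_apply_eq]; exact Fin.ext (by rw [eN_inl]; omega)

lemma rb_apply_22 (M : Matrix (Fin 2 ⊕ Fin (2 * n)) (Fin 2 ⊕ Fin (2 * n)) ℂ)
    (i j : Fin (2 * (n + 1))) (x y : Fin (2 * n))
    (hx : (i : ℕ) = 2 + x) (hy : (j : ℕ) = 2 + y) :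
    reindex (eN n) (eN n) M i j = M (Sum.inr x) (Sum.inr y) := by
  rw [reindex_apply, submatrix_apply]
  congr 1
  · rw [Equiv.symm_apply_eq]; exact Fin.ext (by rw [eN_inr]; omega)
  · rw [Equiv.symm_apply_eq]; exact Fin.ext (by rw [eN_inr]; omega)

lemma tri_prod (r : ℂ) (B21 : Matrix (Fin (2 * n)) (Fin 2) ℂ)
    (B22 : Matrix (Fin (2 * n)) (Fin (2 * n)) ℂ) :
    reindex (eN n) (eN n) (fromBlocks (r • (1 : Matrix (Fin 2) (Fin 2) ℂ)) 0 B21 B22) *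
      skewJC (n + 1) *
      (reindex (eN n) (eN n) (fromBlocks (r • (1 : Matrix (Fin 2) (Fin 2) ℂ)) 0 B21 B22))ᵀ =
    reindex (eN n) (eN n)
      (fromBlocks ((r ^ 2) • j0) (r • (j0 * B21ᵀ)) (r • (B21 * j0))
        (B21 * j0 * B21ᵀ + B22 * skewJC n * B22ᵀ)) := by
  rw [skewJC_succ, transpose_reindex, reindex_mul, reindex_mul]
  congr 1
  rw [fromBlocks_transpose, fromBlocks_multiply, fromBlocks_multiply]
  congr 1 <;>
  · simp [Matrix.smul_mul, Matrix.mul_smul, transpose_smul, smul_smul, pow_two,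
      Matrix.mul_assoc]

lemma cond_build (r : ℂ) (hr : r ≠ 0) (B21 : Matrix (Fin (2 * n)) (Fin 2) ℂ)
    (B22 : Matrix (Fin (2 * n)) (Fin (2 * n)) ℂ)
    (h1 : ∀ i j : Fin (2 * n), (i : ℕ) / 2 < (j : ℕ) / 2 → B22 i j = 0)
    (h2 : ∀ k : ℕ, ∀ hk : k < n, ∃ r' : ℂ, r' ≠ 0 ∧
      B22 ⟨2 * k, by omega⟩ ⟨2 * k, by omega⟩ = r' ∧
      B22 ⟨2 * k, by omega⟩ ⟨2 * k + 1, by omega⟩ = 0 ∧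
      B22 ⟨2 * k + 1, by omega⟩ ⟨2 * k, by omega⟩ = 0 ∧
      B22 ⟨2 * k + 1, by omega⟩ ⟨2 * k + 1, by omega⟩ = r') :
    (∀ i j : Fin (2 * (n + 1)), (i : ℕ) / 2 < (j : ℕ) / 2 →
      reindex (eN n) (eN n) (fromBlocks (r • 1) 0 B21 B22) i j = 0) ∧
    (∀ k : ℕ, ∀ hk : k < n + 1, ∃ r' : ℂ, r' ≠ 0 ∧
      reindex (eN n) (eN n) (fromBlocks (r • 1) 0 B21 B22) ⟨2 * k, by omega⟩ ⟨2 * k, by omega⟩ = r' ∧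
      reindex (eN n) (eN n) (fromBlocks (r • 1) 0 B21 B22) ⟨2 * k, by omega⟩ ⟨2 * k + 1, by omega⟩ = 0 ∧
      reindex (eN n) (eN n) (fromBlocks (r • 1) 0 B21 B22) ⟨2 * k + 1, by omega⟩ ⟨2 * k, by omega⟩ = 0 ∧
      reindex (eN n) (eN n) (fromBlocks (r • 1) 0 B21 B22) ⟨2 * k + 1, by omega⟩ ⟨2 * k + 1, by omega⟩ = r') := by
  constructor
  · intro i j hij
    rcases lt_or_ge (i : ℕ) 2 with hi | hi <;> rcases lt_or_ge (j : ℕ) 2 with hj | hj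
    · omega
    · rw [rb_apply_12 _ i j ⟨i, hi⟩ ⟨(j : ℕ) - 2, by omega⟩ rfl (by simp only [Fin.val_mk]; omega)]
      simp
    · omega
    · rw [rb_apply_22 _ i j ⟨(i : ℕ) - 2, by omega⟩ ⟨(j : ℕ) - 2, by omega⟩
        (by simp only [Fin.val_mk]; omega) (by simp only [Fin.val_mk]; omega)]
      exact h1 _ _ (by simp only [Fin.val_mk]; omega)
  · intro k hk
    match k with
    | 0 =>
      refine ⟨r, hr, ?_, ?_, ?_, ?_⟩
      · rw [rb_apply_11 _ _ _ 0 0 (by simp) (by simp)]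
        simp
      · rw [rb_apply_11 _ _ _ 0 1 (by simp) (by simp)]
        simp [Matrix.one_apply]
      · rw [rb_apply_11 _ _ _ 1 0 (by simp) (by simp)]
        simp [Matrix.one_apply]
      · rw [rb_apply_11 _ _ _ 1 1 (by simp) (by simp)]
        simp
    | k + 1 =>
      obtain ⟨r', hr', e1, e2, e3, e4⟩ := h2 k (by omega)
      refine ⟨r', hr', ?_, ?_, ?_, ?_⟩
      · rw [rb_apply_22 _ _ _ ⟨2 * k, by omega⟩ ⟨2 * k, by omega⟩
          (by simp only [Fin.val_mk]; omega) (by simp only [Fin.val_mk]; omega)]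
        exact e1
      · rw [rb_apply_22 _ _ _ ⟨2 * k, by omega⟩ ⟨2 * k + 1, by omega⟩
          (by simp only [Fin.val_mk]; omega) (by simp only [Fin.val_mk]; omega)]
        exact e2
      · rw [rb_apply_22 _ _ _ ⟨2 * k + 1, by omega⟩ ⟨2 * k, by omega⟩
          (by simp only [Fin.val_mk]; omega) (by simp only [Fin.val_mk]; omega)]
        exact e3
      · rw [rb_apply_22 _ _ _ ⟨2 * k + 1, by omega⟩ ⟨2 * k + 1, by omega⟩
          (by simp only [Fin.val_mk]; omega) (by simp only [Fin.val_mk]; omega)]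
        exact e4

def blk11 (n : ℕ) (A : Matrix (Fin (2 * (n + 1))) (Fin (2 * (n + 1))) ℂ) :
    Matrix (Fin 2) (Fin 2) ℂ :=
  Matrix.of fun a b => A (eN n (Sum.inl a)) (eN n (Sum.inl b))

def blk12 (n : ℕ) (A : Matrix (Fin (2 * (n + 1))) (Fin (2 * (n + 1))) ℂ) :
    Matrix (Fin 2) (Fin (2 * n)) ℂ :=
  Matrix.of fun a b => A (eN n (Sum.inl a)) (eN n (Sum.inr b))

def blk21 (n : ℕ) (A : Matrix (Fin (2 * (n + 1))) (Fin (2 * (n + 1))) ℂ) :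
    Matrix (Fin (2 * n)) (Fin 2) ℂ :=
  Matrix.of fun a b => A (eN n (Sum.inr a)) (eN n (Sum.inl b))

def blk22 (n : ℕ) (A : Matrix (Fin (2 * (n + 1))) (Fin (2 * (n + 1))) ℂ) :
    Matrix (Fin (2 * n)) (Fin (2 * n)) ℂ :=
  Matrix.of fun a b => A (eN n (Sum.inr a)) (eN n (Sum.inr b))

lemma blocks_eq (A : Matrix (Fin (2 * (n + 1))) (Fin (2 * (n + 1))) ℂ) :
    A = reindex (eN n) (eN n) (fromBlocks (blk11 n A) (blk12 n A) (blk21 n A) (blk22 n A)) := by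
  ext i j
  obtain ⟨x, rfl⟩ := (eN n).surjective i
  obtain ⟨y, rfl⟩ := (eN n).surjective j
  rw [reindex_apply, submatrix_apply, Equiv.symm_apply_apply, Equiv.symm_apply_apply]
  cases x <;> cases y <;> rfl

lemma exists_factor : ∀ (n : ℕ) (A : Matrix (Fin (2 * n)) (Fin (2 * n)) ℂ), Aᵀ = -A →
    (∀ k : ℕ, 1 ≤ k → ∀ hk : 2 * k ≤ 2 * n,
      (A.submatrix (Fin.castLE hk) (Fin.castLE hk)).det ≠ 0) →
    ∃ B, IsSkewCholFactor n A B := by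
  intro n
  induction n with
  | zero =>
    intro A _ _
    refine ⟨A, fun i _ _ => absurd i.isLt (by omega), fun k hk => absurd hk (by omega), ?_⟩
    ext i j
    exact absurd i.isLt (by omega)
  | succ n IH =>
    intro A hskew hdet
    have hsk : ∀ i j, A j i = -A i j := fun i j => by
      have h := congrFun (congrFun hskew i) j
      simpa [Matrix.transpose_apply, Matrix.neg_apply] using h
    have hdiag : ∀ i, A i i = 0 := fun i => by
      have h := hsk i i
      linear_combination h / 2
    set A11 := blk11 n A with hA11def
    set A12 := blk12 n A with hA12def
    set A21 := blk21 n A with hA21def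
    set A22 := blk22 n A with hA22def
    set a : ℂ := A11 0 1 with hadef
    -- A11 in terms of a
    have hA11 : A11 = (-a) • j0 := by
      ext x y
      fin_cases x <;> fin_cases y <;>
        simp only [hA11def, blk11, of_apply, Matrix.smul_apply, j0, smul_eq_mul]
      · norm_num [hdiag]
      · norm_num [hadef, hA11def, blk11]
      · norm_num
        rw [hsk]
        norm_num [hadef, hA11def, blk11]
      · norm_num [hdiag]
    -- a ≠ 0
    have ha : a ≠ 0 := by
      have h2 : 2 * 1 ≤ 2 * (n + 1) := by omega
      have hd := hdet 1 le_rfl h2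
      have hdet2 : (A.submatrix (Fin.castLE h2) (Fin.castLE h2)).det =
          A (Fin.castLE h2 0) (Fin.castLE h2 0) * A (Fin.castLE h2 1) (Fin.castLE h2 1) -
          A (Fin.castLE h2 0) (Fin.castLE h2 1) * A (Fin.castLE h2 1) (Fin.castLE h2 0) :=
        Matrix.det_fin_two _
      have e0 : (Fin.castLE h2 0 : Fin (2 * (n + 1))) = eN n (Sum.inl 0) :=
        Fin.ext (by rw [eN_inl]; rfl)
      have e1 : (Fin.castLE h2 1 : Fin (2 * (n + 1))) = eN n (Sum.inl 1) :=
        Fin.ext (by rw [eN_inl]; rfl)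
      rw [hdet2, e0, e1] at hd
      intro h0
      apply hd
      have haa : A (eN n (Sum.inl 0)) (eN n (Sum.inl 1)) = a := rfl
      rw [hdiag, hdiag, hsk (eN n (Sum.inl 0)) (eN n (Sum.inl 1)), haa, h0]
      ring
    -- square root of -a
    set r : ℂ := (-a) ^ ((2 : ℂ)⁻¹) with hrdef
    have hr2 : r ^ 2 = -a := by
      have := Complex.cpow_nat_inv_pow (-a) (n := 2) (by norm_num)
      rw [hrdef]
      push_cast at this
      exact this
    have hr : r ≠ 0 := by
      intro h0
      rw [h0] at hr2
      apply ha
      have h : -a = 0 := by rw [← hr2]; ring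
      exact neg_eq_zero.mp h
    -- B21 and its transpose
    set B21 : Matrix (Fin (2 * n)) (Fin 2) ℂ := r⁻¹ • (A21 * j0ᵀ) with hB21def
    have hB21t : B21ᵀ = r⁻¹ • (j0 * A21ᵀ) := by
      rw [hB21def, transpose_smul, transpose_mul, transpose_transpose]
    have hA12eq : A12 = -A21ᵀ := by
      ext x y
      simp only [hA12def, hA21def, blk12, blk21, of_apply, Matrix.neg_apply, transpose_apply]
      exact hsk _ _
    have hsc : r⁻¹ * r⁻¹ = (-a)⁻¹ := by
      rw [← hr2, sq, mul_inv]
    have hmat : A21 * j0ᵀ * j0 * (j0 * A21ᵀ) = A21 * j0 * A21ᵀ := by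
      rw [Matrix.mul_assoc A21 j0ᵀ j0, j0t_mul_j0, Matrix.mul_one, ← Matrix.mul_assoc]
    have hprod : B21 * j0 * B21ᵀ = (-a)⁻¹ • (A21 * j0 * A21ᵀ) := by
      rw [hB21t, hB21def, Matrix.smul_mul, Matrix.smul_mul, Matrix.mul_smul, smul_smul, hsc,
        hmat]
    set S : Matrix (Fin (2 * n)) (Fin (2 * n)) ℂ := A22 - B21 * j0 * B21ᵀ with hSdef
    have hA22skew : A22ᵀ = -A22 := by
      ext x y
      simp only [transpose_apply, hA22def, blk22, of_apply, Matrix.neg_apply]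
      exact hsk _ _
    have hPt : (B21 * j0 * B21ᵀ)ᵀ = -(B21 * j0 * B21ᵀ) := by
      rw [transpose_mul, transpose_mul, transpose_transpose, j0t, Matrix.neg_mul,
        Matrix.mul_neg, Matrix.mul_assoc]
    have hSskew : Sᵀ = -S := by
      rw [hSdef, transpose_sub, hA22skew, hPt]
      abel
    have hSdetm : ∀ k : ℕ, 1 ≤ k → ∀ hk : 2 * k ≤ 2 * n,
        (S.submatrix (Fin.castLE hk) (Fin.castLE hk)).det ≠ 0 := by
      intro k hk1 hk
      have hk2 : 2 * (k + 1) ≤ 2 * (n + 1) := by omega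
      have hAk := hdet (k + 1) (by omega) hk2
      have hA11inv : A11 * (a⁻¹ • j0) = 1 := by
        rw [hA11, Matrix.mul_smul, Matrix.smul_mul, smul_smul, j0_mul_j0,
          show a⁻¹ * -a = -1 from by field_simp]
        simp
      haveI : Invertible A11 := invertibleOfRightInverse _ _ hA11inv
      have hinvOf : ⅟A11 = a⁻¹ • j0 := invOf_eq_right_inv hA11inv
      have key : (A.submatrix (Fin.castLE hk2) (Fin.castLE hk2)).submatrix (eN k) (eN k) =
          fromBlocks A11 (A12.submatrix id (Fin.castLE hk)) (A21.submatrix (Fin.castLE hk) id)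
            (A22.submatrix (Fin.castLE hk) (Fin.castLE hk)) := by
        ext x y
        cases x <;> cases y <;>
        · simp only [submatrix_apply, fromBlocks_apply₁₁, fromBlocks_apply₁₂,
            fromBlocks_apply₂₁, fromBlocks_apply₂₂, hA11def, hA12def, hA21def, hA22def,
            blk11, blk12, blk21, blk22, of_apply, id_eq]
          congr 1 <;> exact Fin.ext (by simp only [Fin.coe_castLE, eN_inl, eN_inr]; omega)
      have hdet1 : (A.submatrix (Fin.castLE hk2) (Fin.castLE hk2)).det =
          a ^ 2 * ((A22.submatrix (Fin.castLE hk) (Fin.castLE hk) -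
            A21.submatrix (Fin.castLE hk) id * ⅟A11 * A12.submatrix id (Fin.castLE hk)).det) := by
        rw [← Matrix.det_submatrix_equiv_self (eN k), key, Matrix.det_fromBlocks₁₁]
        congr 1
        rw [hA11, Matrix.det_smul, j0_det]
        simp [Fintype.card_fin]
      have h1 : A21.submatrix (Fin.castLE hk) id * (a⁻¹ • j0) * A12.submatrix id (Fin.castLE hk)
          = (A21 * (a⁻¹ • j0) * A12).submatrix (Fin.castLE hk) (Fin.castLE hk) := by
        rw [Matrix.submatrix_mul (A21 * (a⁻¹ • j0)) A12 (Fin.castLE hk) id (Fin.castLE hk)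
            Function.bijective_id,
          Matrix.submatrix_mul A21 (a⁻¹ • j0) (Fin.castLE hk) id id Function.bijective_id,
          submatrix_id_id]
      have h2 : A21 * (a⁻¹ • j0) * A12 = B21 * j0 * B21ᵀ := by
        rw [hA12eq, hprod, inv_neg, neg_smul, Matrix.mul_smul, Matrix.mul_neg,
          Matrix.smul_mul]
      have hSchur : A22.submatrix (Fin.castLE hk) (Fin.castLE hk) -
          A21.submatrix (Fin.castLE hk) id * ⅟A11 * A12.submatrix id (Fin.castLE hk) =
          S.submatrix (Fin.castLE hk) (Fin.castLE hk) := by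
        rw [hinvOf, h1, h2, hSdef]
        ext x y
        simp [Matrix.sub_apply]
      rw [hdet1, hSchur] at hAk
      intro h0
      exact hAk (by rw [h0, mul_zero])
    obtain ⟨B22, hB22t, hB22d, hB22p⟩ := IH S hSskew hSdetm
    refine ⟨reindex (eN n) (eN n) (fromBlocks (r • 1) 0 B21 B22),
      (cond_build r hr B21 B22 hB22t hB22d).1, (cond_build r hr B21 B22 hB22t hB22d).2, ?_⟩
    have hb1 : A11 = r ^ 2 • j0 := by rw [hA11, hr2]
    have hb2 : A12 = r • (j0 * B21ᵀ) := by
      rw [hA12eq, hB21t, Matrix.mul_smul, smul_smul, mul_inv_cancel₀ hr, one_smul,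
        ← Matrix.mul_assoc, j0_mul_j0, Matrix.neg_mul, Matrix.one_mul]
    have hb3 : A21 = r • (B21 * j0) := by
      rw [hB21def, Matrix.smul_mul, smul_smul, mul_inv_cancel₀ hr, one_smul,
        Matrix.mul_assoc, j0t_mul_j0, Matrix.mul_one]
    have hb4 : A22 = B21 * j0 * B21ᵀ + B22 * skewJC n * B22ᵀ := by
      rw [← hB22p, hSdef]
      abel
    rw [tri_prod]
    conv_lhs => rw [blocks_eq A]
    rw [← hA11def, ← hA12def, ← hA21def, ← hA22def, hb1, hb2, hb3, hb4]

lemma factor_decomp {n : ℕ} {A B : Matrix (Fin (2 * (n + 1))) (Fin (2 * (n + 1))) ℂ}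
    (h : IsSkewCholFactor (n + 1) A B) :
    ∃ (r : ℂ) (B21 : Matrix (Fin (2 * n)) (Fin 2) ℂ)
      (B22 : Matrix (Fin (2 * n)) (Fin (2 * n)) ℂ),
      r ≠ 0 ∧
      B = reindex (eN n) (eN n) (fromBlocks (r • 1) 0 B21 B22) ∧
      IsSkewCholFactor n (B22 * skewJC n * B22ᵀ) B22 ∧
      A = reindex (eN n) (eN n)
        (fromBlocks ((r ^ 2) • j0) (r • (j0 * B21ᵀ)) (r • (B21 * j0))
          (B21 * j0 * B21ᵀ + B22 * skewJC n * B22ᵀ)) := by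
  obtain ⟨h1, h2, h3⟩ := h
  obtain ⟨r, hr, e00, e01, e10, e11⟩ := h2 0 (by omega)
  have hB11 : ∀ (i j : Fin (2 * (n + 1))), (i : ℕ) < 2 → (j : ℕ) < 2 →
      B i j = if (i : ℕ) = (j : ℕ) then r else 0 := by
    intro i j hi hj
    rcases (by omega : (i : ℕ) = 0 ∨ (i : ℕ) = 1) with hi0 | hi0 <;>
      rcases (by omega : (j : ℕ) = 0 ∨ (j : ℕ) = 1) with hj0 | hj0
    · have hv : B i j = r := by
        rw [show i = (⟨2 * 0, by omega⟩ : Fin (2 * (n + 1))) from Fin.ext (by simp only [Fin.val_mk]; omega),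
          show j = (⟨2 * 0, by omega⟩ : Fin (2 * (n + 1))) from Fin.ext (by simp only [Fin.val_mk]; omega)]
        exact e00
      rw [hv, if_pos (by omega)]
    · have hv : B i j = 0 := by
        rw [show i = (⟨2 * 0, by omega⟩ : Fin (2 * (n + 1))) from Fin.ext (by simp only [Fin.val_mk]; omega),
          show j = (⟨2 * 0 + 1, by omega⟩ : Fin (2 * (n + 1))) from Fin.ext (by simp only [Fin.val_mk]; omega)]
        exact e01
      rw [hv, if_neg (by omega)]
    · have hv : B i j = 0 := by
        rw [show i = (⟨2 * 0 + 1, by omega⟩ : Fin (2 * (n + 1))) from Fin.ext (by simp only [Fin.val_mk]; omega),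
          show j = (⟨2 * 0, by omega⟩ : Fin (2 * (n + 1))) from Fin.ext (by simp only [Fin.val_mk]; omega)]
        exact e10
      rw [hv, if_neg (by omega)]
    · have hv : B i j = r := by
        rw [show i = (⟨2 * 0 + 1, by omega⟩ : Fin (2 * (n + 1))) from Fin.ext (by simp only [Fin.val_mk]; omega),
          show j = (⟨2 * 0 + 1, by omega⟩ : Fin (2 * (n + 1))) from Fin.ext (by simp only [Fin.val_mk]; omega)]
        exact e11
      rw [hv, if_pos (by omega)]
  have hBeq : B = reindex (eN n) (eN n) (fromBlocks (r • 1) 0 (blk21 n B) (blk22 n B)) := by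
    ext i j
    rcases lt_or_ge (i : ℕ) 2 with hi | hi <;> rcases lt_or_ge (j : ℕ) 2 with hj | hj
    · rw [rb_apply_11 _ i j ⟨i, hi⟩ ⟨j, hj⟩ rfl rfl, hB11 i j hi hj]
      simp only [fromBlocks_apply₁₁, Matrix.smul_apply, Matrix.one_apply, smul_eq_mul,
        Fin.mk.injEq]
      split_ifs <;> simp_all
    · rw [rb_apply_12 _ i j ⟨i, hi⟩ ⟨(j : ℕ) - 2, by omega⟩ rfl
        (by first | omega | (simp only [Fin.val_mk]; omega))]
      simp only [fromBlocks_apply₁₂, Matrix.zero_apply]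
      exact h1 i j (by omega)
    · rw [rb_apply_21 _ i j ⟨(i : ℕ) - 2, by omega⟩ ⟨j, hj⟩
        (by first | omega | (simp only [Fin.val_mk]; omega)) rfl]
      rw [fromBlocks_apply₂₁]
      show B i j = B _ _
      rw [show eN n (Sum.inr ⟨(i : ℕ) - 2, by omega⟩) = i from
          Fin.ext (by rw [eN_inr]; first | omega | (simp only [Fin.val_mk]; omega)),
        show eN n (Sum.inl ⟨(j : ℕ), hj⟩) = j from Fin.ext (by rw [eN_inl])]
    · rw [rb_apply_22 _ i j ⟨(i : ℕ) - 2, by omega⟩ ⟨(j : ℕ) - 2, by omega⟩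
        (by first | omega | (simp only [Fin.val_mk]; omega))
        (by first | omega | (simp only [Fin.val_mk]; omega))]
      rw [fromBlocks_apply₂₂]
      show B i j = B _ _
      rw [show eN n (Sum.inr ⟨(i : ℕ) - 2, by omega⟩) = i from
          Fin.ext (by rw [eN_inr]; first | omega | (simp only [Fin.val_mk]; omega)),
        show eN n (Sum.inr ⟨(j : ℕ) - 2, by omega⟩) = j from
          Fin.ext (by rw [eN_inr]; first | omega | (simp only [Fin.val_mk]; omega))]
  refine ⟨r, blk21 n B, blk22 n B, hr, hBeq, ⟨?_, ?_, rfl⟩, ?_⟩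
  · intro x y hxy
    exact h1 _ _ (by rw [eN_inr, eN_inr]; omega)
  · intro k hk
    obtain ⟨r', hr', f1, f2, f3, f4⟩ := h2 (k + 1) (by omega)
    refine ⟨r', hr', ?_, ?_, ?_, ?_⟩
    · show B _ _ = r'
      rw [show eN n (Sum.inr ⟨2 * k, by omega⟩) = (⟨2 * (k + 1), by omega⟩ : Fin (2 * (n + 1)))
          from Fin.ext (by rw [eN_inr]; simp only [Fin.val_mk]; omega)]
      exact f1
    · show B _ _ = 0
      rw [show eN n (Sum.inr ⟨2 * k, by omega⟩) = (⟨2 * (k + 1), by omega⟩ : Fin (2 * (n + 1)))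
          from Fin.ext (by rw [eN_inr]; simp only [Fin.val_mk]; omega),
        show eN n (Sum.inr ⟨2 * k + 1, by omega⟩) =
            (⟨2 * (k + 1) + 1, by omega⟩ : Fin (2 * (n + 1)))
          from Fin.ext (by rw [eN_inr]; simp only [Fin.val_mk]; omega)]
      exact f2
    · show B _ _ = 0
      rw [show eN n (Sum.inr ⟨2 * k + 1, by omega⟩) =
            (⟨2 * (k + 1) + 1, by omega⟩ : Fin (2 * (n + 1)))
          from Fin.ext (by rw [eN_inr]; simp only [Fin.val_mk]; omega),
        show eN n (Sum.inr ⟨2 * k, by omega⟩) = (⟨2 * (k + 1), by omega⟩ : Fin (2 * (n + 1)))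
          from Fin.ext (by rw [eN_inr]; simp only [Fin.val_mk]; omega)]
      exact f3
    · show B _ _ = r'
      rw [show eN n (Sum.inr ⟨2 * k + 1, by omega⟩) =
            (⟨2 * (k + 1) + 1, by omega⟩ : Fin (2 * (n + 1)))
          from Fin.ext (by rw [eN_inr]; simp only [Fin.val_mk]; omega)]
      exact f4
  · rw [hBeq] at h3
    rw [tri_prod] at h3
    exact h3

lemma unique_factor : ∀ (n : ℕ) (A B B' : Matrix (Fin (2 * n)) (Fin (2 * n)) ℂ),
    IsSkewCholFactor n A B → IsSkewCholFactor n A B' →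
    ∃ D : Matrix (Fin (2 * n)) (Fin (2 * n)) ℂ,
      (∀ i j : Fin (2 * n), i ≠ j → D i j = 0) ∧
      (∀ k : ℕ, ∀ hk : k < n, ∃ ε : ℂ, (ε = 1 ∨ ε = -1) ∧
        D ⟨2 * k, by omega⟩ ⟨2 * k, by omega⟩ = ε ∧
        D ⟨2 * k + 1, by omega⟩ ⟨2 * k + 1, by omega⟩ = ε) ∧
      B' = B * D := by
  intro n
  induction n with
  | zero =>
    intro A B B' _ _
    refine ⟨1, fun i _ _ => absurd i.isLt (by omega), fun k hk => absurd hk (by omega), ?_⟩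
    ext i _
    exact absurd i.isLt (by omega)
  | succ n IH =>
    intro A B B' hB hB'
    obtain ⟨r, B21, B22, hr, hBeq, hB22, hAeq⟩ := factor_decomp hB
    obtain ⟨r', B21', B22', hr', hBeq', hB22', hAeq'⟩ := factor_decomp hB'
    have hfb : fromBlocks ((r ^ 2) • j0) (r • (j0 * B21ᵀ)) (r • (B21 * j0))
          (B21 * j0 * B21ᵀ + B22 * skewJC n * B22ᵀ)
        = fromBlocks ((r' ^ 2) • j0) (r' • (j0 * B21'ᵀ)) (r' • (B21' * j0))
          (B21' * j0 * B21'ᵀ + B22' * skewJC n * B22'ᵀ) :=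
      (reindex (eN n) (eN n)).injective (hAeq.symm.trans hAeq')
    have hr2eq : r ^ 2 = r' ^ 2 := by
      have h := congrFun (congrFun hfb (Sum.inl 0)) (Sum.inl 1)
      simp only [fromBlocks_apply₁₁, Matrix.smul_apply, smul_eq_mul] at h
      rw [show j0 0 1 = -1 from by simp [j0]] at h
      linear_combination -h
    set ε := r' / r with hεdef
    have hε : ε = 1 ∨ ε = -1 := by
      have hfac : (r' - r) * (r' + r) = 0 := by linear_combination -hr2eq
      rcases mul_eq_zero.mp hfac with h0 | h0
      · left
        rw [hεdef, sub_eq_zero.mp h0, div_self hr]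
      · right
        rw [hεdef, show r' = -r from by linear_combination h0, neg_div, div_self hr]
    have hεr : r * ε = r' := by
      rw [hεdef]
      field_simp
    have hε2 : ε * ε = 1 := by
      rcases hε with h | h <;> rw [h] <;> ring
    have h21 : B21' = ε • B21 := by
      have hb : r • (B21 * j0) = r' • (B21' * j0) := by
        ext x y
        have h := congrFun (congrFun hfb (Sum.inr x)) (Sum.inl y)
        simpa using h
      have hb2 : r • B21 = r' • B21' := by
        have h := congrArg (fun M => M * j0ᵀ) hb
        simpa [Matrix.smul_mul, Matrix.mul_assoc, j0_mul_j0t] using h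
      have hrr : r = r' * ε := by
        rw [← hεr, mul_assoc, hε2, mul_one]
      have h3 : r' • B21' = r' • (ε • B21) := by
        rw [← hb2, smul_smul, ← hrr]
      exact smul_right_injective _ hr' h3
    have h21sq : B21' * j0 * B21'ᵀ = B21 * j0 * B21ᵀ := by
      rw [h21, transpose_smul, Matrix.smul_mul, Matrix.smul_mul, Matrix.mul_smul, smul_smul,
        hε2, one_smul]
    have hS : B22 * skewJC n * B22ᵀ = B22' * skewJC n * B22'ᵀ := by
      have hb : B21 * j0 * B21ᵀ + B22 * skewJC n * B22ᵀ
          = B21' * j0 * B21'ᵀ + B22' * skewJC n * B22'ᵀ := by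
        ext x y
        have h := congrFun (congrFun hfb (Sum.inr x)) (Sum.inr y)
        simpa using h
      rw [h21sq] at hb
      exact add_left_cancel hb
    have hB22'' : IsSkewCholFactor n (B22 * skewJC n * B22ᵀ) B22' := by
      rw [hS]
      exact hB22'
    obtain ⟨D2, hD2a, hD2b, hD2c⟩ := IH _ B22 B22' hB22 hB22''
    refine ⟨reindex (eN n) (eN n) (fromBlocks (ε • 1) 0 0 D2), ?_, ?_, ?_⟩
    · intro i j hij
      rcases lt_or_ge (i : ℕ) 2 with hi | hi <;> rcases lt_or_ge (j : ℕ) 2 with hj | hj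
      · rw [rb_apply_11 _ i j ⟨i, hi⟩ ⟨j, hj⟩ rfl rfl]
        have hne : (⟨(i : ℕ), hi⟩ : Fin 2) ≠ ⟨j, hj⟩ := by
          intro h
          exact hij (Fin.ext (by simpa [Fin.ext_iff] using h))
        simp [Matrix.one_apply, hne]
      · rw [rb_apply_12 _ i j ⟨i, hi⟩ ⟨(j : ℕ) - 2, by omega⟩ rfl
          (by first | omega | (simp only [Fin.val_mk]; omega))]
        simp
      · rw [rb_apply_21 _ i j ⟨(i : ℕ) - 2, by omega⟩ ⟨j, hj⟩
          (by first | omega | (simp only [Fin.val_mk]; omega)) rfl]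
        simp
      · rw [rb_apply_22 _ i j ⟨(i : ℕ) - 2, by omega⟩ ⟨(j : ℕ) - 2, by omega⟩
          (by first | omega | (simp only [Fin.val_mk]; omega))
          (by first | omega | (simp only [Fin.val_mk]; omega))]
        rw [fromBlocks_apply₂₂]
        refine hD2a _ _ fun h => hij (Fin.ext ?_)
        have h2 := congrArg Fin.val h
        simp only [Fin.val_mk] at h2
        omega
    · intro k hk
      match k with
      | 0 =>
        refine ⟨ε, hε, ?_, ?_⟩
        · rw [rb_apply_11 _ _ _ 0 0 (by simp) (by simp)]
          simp
        · rw [rb_apply_11 _ _ _ 1 1 (by simp) (by simp)]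
          simp
      | k + 1 =>
        obtain ⟨ε2, hε2', g1, g2⟩ := hD2b k (by omega)
        refine ⟨ε2, hε2', ?_, ?_⟩
        · rw [rb_apply_22 _ _ _ ⟨2 * k, by omega⟩ ⟨2 * k, by omega⟩
            (by first | omega | (simp only [Fin.val_mk]; omega))
            (by first | omega | (simp only [Fin.val_mk]; omega))]
          exact g1
        · rw [rb_apply_22 _ _ _ ⟨2 * k + 1, by omega⟩ ⟨2 * k + 1, by omega⟩
            (by first | omega | (simp only [Fin.val_mk]; omega))
            (by first | omega | (simp only [Fin.val_mk]; omega))]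
          exact g2
    · rw [hBeq, hBeq', reindex_mul]
      congr 1
      rw [fromBlocks_multiply]
      simp only [Matrix.mul_zero, Matrix.zero_mul, add_zero, zero_add, Matrix.smul_mul,
        Matrix.mul_smul, smul_smul, Matrix.one_mul, Matrix.mul_one]
      rw [show ε * r = r' from by rw [mul_comm]; exact hεr, ← h21, ← hD2c]

end SC
end

/-- **Complex skew-symmetric Cholesky factorization.** If `A` is a complex
skew-symmetric `2ℓ × 2ℓ` matrix with `det (A^(2k)) ≠ 0` for `k = 1, …, ℓ`, then there
exists a skew-symmetric Cholesky factor `B` of `A`, and it is unique up to right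
multiplication by a block diagonal matrix whose `2 × 2` diagonal blocks are `± I₂`. -/
theorem skew_cholesky_factorization_complex (ℓ : ℕ) (hℓ : 1 ≤ ℓ)
    (A : Matrix (Fin (2 * ℓ)) (Fin (2 * ℓ)) ℂ) (hskew : Aᵀ = -A)
    (hdet : ∀ k : ℕ, 1 ≤ k → ∀ hk : 2 * k ≤ 2 * ℓ,
      (A.submatrix (Fin.castLE hk) (Fin.castLE hk)).det ≠ 0) :
    (∃ B : Matrix (Fin (2 * ℓ)) (Fin (2 * ℓ)) ℂ, IsSkewCholFactor ℓ A B) ∧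
    (∀ B B' : Matrix (Fin (2 * ℓ)) (Fin (2 * ℓ)) ℂ,
      IsSkewCholFactor ℓ A B → IsSkewCholFactor ℓ A B' →
      ∃ D : Matrix (Fin (2 * ℓ)) (Fin (2 * ℓ)) ℂ,
        (∀ i j : Fin (2 * ℓ), i ≠ j → D i j = 0) ∧
        (∀ k : ℕ, ∀ hk : k < ℓ, ∃ ε : ℂ, (ε = 1 ∨ ε = -1) ∧
          D ⟨2 * k, by omega⟩ ⟨2 * k, by omega⟩ = ε ∧
          D ⟨2 * k + 1, by omega⟩ ⟨2 * k + 1, by omega⟩ = ε) ∧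
        B' = B * D) := by
  refine ⟨SC.exists_factor ℓ A hskew hdet, fun B B' hB hB' => ?_⟩
  exact SC.unique_factor ℓ A B B' hB hB'
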